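/- For a persistence module M : P → Vec over a poset P and intervals I ⊆ J of P, the generalized rank is order-reversing: rank(M|_I) ≥ rank(M|_J), where the generalized rank over an interval is the rank of the canonical limit-to-colimit map of the restriction of M to that interval. -/

import Mathlib

open CategoryTheory Limits

variable (K : Type) [Field K] {P : Type} [PartialOrder P]

/-- Zigzag-connectedness of a subset of a poset. -/
def ConnectedIn (I : Set P) : Prop :=
  ∀ p ∈ I, ∀ q ∈ I, Relation.ReflTransGen (fun a b => a ∈ I ∧ b ∈ I ∧ (a ≤ b ∨ b ≤ a)) p q

/-- Convexity of a subset of a poset. -/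
def ConvexIn (I : Set P) : Prop :=
  ∀ ⦃p q r : P⦄, p ∈ I → r ∈ I → p ≤ q → q ≤ r → q ∈ I

/-- An interval of a poset: nonempty, convex and connected. -/
def IsIntervalSet (I : Set P) : Prop :=
  I.Nonempty ∧ ConvexIn I ∧ ConnectedIn I

/-- Restriction of a persistence module to a subset of the indexing poset. -/
def restrict (M : P ⥤ ModuleCat.{0} K) (I : Set P) : I ⥤ ModuleCat.{0} K :=
  (Monotone.functor (f := (Subtype.val : I → P)) (fun _ _ h => h)) ⋙ M

/-- The canonical limit-to-colimit map `i_p ∘ π_p` of the restriction of `M` to `I`. -/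
noncomputable def canMap (M : P ⥤ ModuleCat.{0} K) (I : Set P) (p : P) (hp : p ∈ I) :
    limit (restrict K M I) ⟶ colimit (restrict K M I) :=
  limit.π (restrict K M I) ⟨p, hp⟩ ≫ colimit.ι (restrict K M I) ⟨p, hp⟩

open Classical in
/-- The generalized rank of `M` over `I` (for `I` an interval, independent of basepoint). -/
noncomputable def genRank (M : P ⥤ ModuleCat.{0} K) (I : Set P) : Cardinal :=
  if h : I.Nonempty then LinearMap.rank (canMap K M I h.choose h.choose_spec).hom else 0


/-- A lower fence of (the subposet) `I`. -/
def IsLowerFenceOf (I L : Set P) : Prop :=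
  L ⊆ I ∧ ConnectedIn L ∧ ∀ q ∈ I, (L ∩ {r | r ≤ q}).Nonempty ∧ ConnectedIn (L ∩ {r | r ≤ q})

/-- An upper fence of (the subposet) `I`. -/
def IsUpperFenceOf (I U : Set P) : Prop :=
  U ⊆ I ∧ ConnectedIn U ∧ ∀ q ∈ I, (U ∩ {r | q ≤ r}).Nonempty ∧ ConnectedIn (U ∩ {r | q ≤ r})

/-- The space of sections of a persistence module: compatible tuples. -/
def sectionsSubmodule (M : P ⥤ ModuleCat.{0} K) : Submodule K (∀ p, M.obj p) where
  carrier := {v | ∀ (p q : P) (h : p ≤ q), M.map h.hom (v p) = v q}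
  add_mem' := by intro a b ha hb p q h; simp [map_add, ha p q h, hb p q h]
  zero_mem' := by intro p q h; simp
  smul_mem' := by intro c a ha p q h; simp [map_smul, ha p q h]

open Classical in
/-- `⊤` if `b` holds, `⊥` otherwise; underlying space of an interval module at a point. -/
noncomputable def condSub (b : Prop) : Submodule K K := if b then ⊤ else ⊥

open Classical in
/-- The structure map of an interval module. -/
noncomputable def condMap (b c : Prop) : condSub K b →ₗ[K] condSub K c where
  toFun x := ⟨if b ∧ c then (x : K) else 0, by
    by_cases hc : c
    · simp [condSub, hc]
    · rw [if_neg (fun h => hc h.2), condSub, if_neg hc]; exact Submodule.zero_mem _⟩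
  map_add' x y := by ext; split_ifs <;> simp
  map_smul' r x := by ext; split_ifs <;> simp

lemma condMap_id (b : Prop) : condMap K b b = LinearMap.id := by
  classical
  ext x
  by_cases hb : b
  · simp [condMap, hb]
  · have hx : (x : K) = 0 := by
      have h2 : ∀ y : K, y ∈ condSub K b → y = 0 := by
        intro y hy; unfold condSub at hy; rw [if_neg hb] at hy; exact (Submodule.mem_bot K).1 hy
      exact h2 _ x.2
    simp [condMap, hb, hx]

lemma condMap_comp (b c d : Prop) (h : b → d → c) :
    (condMap K c d).comp (condMap K b c) = condMap K b d := by
  classical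
  ext x
  by_cases hb : b <;> by_cases hc : c <;> by_cases hd : d <;>
    simp [condMap, hb, hc, hd]
  exact absurd (h hb hd) hc

/-- The interval module supported on a convex set `S`. -/
noncomputable def IM (S : Set P) (hS : ConvexIn S) : P ⥤ ModuleCat.{0} K where
  obj p := ModuleCat.of K (condSub K (p ∈ S))
  map {p q} h := ModuleCat.ofHom (condMap K (p ∈ S) (q ∈ S))
  map_id p := by
    rw [condMap_id]
    rfl
  map_comp {p q r} h h' := by
    rw [← condMap_comp K (p ∈ S) (q ∈ S) (r ∈ S) (fun hp hr => hS hp hr h.le h'.le)]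
    rfl

lemma canMap_eq_of_le (M : P ⥤ ModuleCat.{0} K) (I : Set P)
    (a b : P) (ha : a ∈ I) (hb : b ∈ I) (hab : a ≤ b) :
    canMap K M I a ha = canMap K M I b hb := by
  have h : (⟨a, ha⟩ : I) ⟶ ⟨b, hb⟩ := homOfLE hab
  calc limit.π (restrict K M I) ⟨a, ha⟩ ≫ colimit.ι (restrict K M I) ⟨a, ha⟩
      = limit.π (restrict K M I) ⟨a, ha⟩ ≫
        ((restrict K M I).map h ≫ colimit.ι (restrict K M I) ⟨b, hb⟩) := by
        rw [colimit.w]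
    _ = (limit.π (restrict K M I) ⟨a, ha⟩ ≫ (restrict K M I).map h) ≫
        colimit.ι (restrict K M I) ⟨b, hb⟩ := by rw [Category.assoc]
    _ = limit.π (restrict K M I) ⟨b, hb⟩ ≫ colimit.ι (restrict K M I) ⟨b, hb⟩ := by
        rw [limit.w]

lemma canMap_eq_of_connected (M : P ⥤ ModuleCat.{0} K) (I : Set P)
    (hconn : ConnectedIn I) (a b : P) (ha : a ∈ I) (hb : b ∈ I) :
    canMap K M I a ha = canMap K M I b hb := by
  have key : ∀ b', Relation.ReflTransGen
      (fun x y => x ∈ I ∧ y ∈ I ∧ (x ≤ y ∨ y ≤ x)) a b' →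
      ∀ hb' : b' ∈ I, canMap K M I a ha = canMap K M I b' hb' := by
    intro b' h
    induction h with
    | refl => intro _; rfl
    | @tail x y _ hxy ih =>
        intro hy'
        obtain ⟨hx, _, hle | hle⟩ := hxy
        · rw [ih hx]; exact canMap_eq_of_le K M I x y hx hy' hle
        · rw [ih hx]; exact (canMap_eq_of_le K M I y x hy' hx hle).symm
  exact key b (hconn a ha b hb) hb

/-- The generalized rank invariant is order-reversing: for intervals `I ⊆ J`,
`rank(M|_I) ≥ rank(M|_J)`. -/
theorem generalizedRank_order_reversing
    (M : P ⥤ ModuleCat.{0} K) (I J : Set P)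
    (hI : IsIntervalSet I) (hJ : IsIntervalSet J) (hIJ : I ⊆ J)
    (p : P) (hp : p ∈ I) (q : P) (hq : q ∈ J) :
    LinearMap.rank (canMap K M J q hq).hom ≤ LinearMap.rank (canMap K M I p hp).hom := by
  have hpJ : p ∈ J := hIJ hp
  rw [canMap_eq_of_connected K M J hJ.2.2 q p hq hpJ]
  let ι : I ⥤ J := Monotone.functor (f := fun x : I => (⟨x.1, hIJ x.2⟩ : J))
    (fun _ _ h => h)
  have hres : restrict K M I = ι ⋙ restrict K M J := rfl
  have key : canMap K M J p hpJ =
      (limit.pre (restrict K M J) ι ≫ canMap K M I p hp) ≫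
        colimit.pre (restrict K M J) ι := by
    show limit.π (restrict K M J) ⟨p, hpJ⟩ ≫ colimit.ι (restrict K M J) ⟨p, hpJ⟩ =
      (limit.pre (restrict K M J) ι ≫ limit.π (ι ⋙ restrict K M J) ⟨p, hp⟩) ≫
        colimit.ι (ι ⋙ restrict K M J) ⟨p, hp⟩ ≫ colimit.pre (restrict K M J) ι
    rw [limit.pre_π, colimit.ι_pre]; rfl
  rw [key]
  exact le_trans
    (LinearMap.rank_comp_le_right
      (LinearMap.comp (canMap K M I p hp).hom (limit.pre (restrict K M J) ι).hom)
      (colimit.pre (restrict K M J) ι).hom)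
    (LinearMap.rank_comp_le_left (limit.pre (restrict K M J) ι).hom (canMap K M I p hp).hom)
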